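/- For each fixed n ≥ 1, there exist rational numbers c_0, c_1, ..., c_{n-1} (independent of m) such that B_n^(m) = c_{n-1} m^{n-1} + c_{n-2} m^{n-2} + ... + c_1 m + c_0 for all m ≥ 0. Equivalently, for each n ≥ 1 there exists a polynomial P_n ∈ ℚ[X] of degree at most n-1 with B_n^(m) = P_n(m) for all natural numbers m. -/

import Mathlib

/-!
The leading Stirling coefficient is `S(n, n) = 1`, so
`B_n^(m+1) - B_n^(m) = ∑_{1 ≤ k < n} S(n, k) B_k^(m)`: the forward difference (in `m`) of
`B_n^(·)` is a combination of `B_k^(·)` with `k < n`. By strong induction the `n`-th forward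
difference of `m ↦ B_n^(m)` vanishes for `n ≥ 1`, and the Gregory–Newton formula then writes
`B_n^(m) = ∑_{k < n} Δᵏ B_n(0) · (m choose k)`, a polynomial of degree at most `n - 1` in `m`.
-/

/-- Stirling numbers of the second kind. -/
def stirling : ℕ → ℕ → ℕ
  | 0, 0 => 1
  | 0, _ + 1 => 0
  | _ + 1, 0 => 0
  | n + 1, k + 1 => (k + 1) * stirling n (k + 1) + stirling n k

/-- Higher order Bell numbers: `higherBell m n` is `B_n^(m)`. -/
def higherBell : ℕ → ℕ → ℕ
  | 0, _ => 1
  | _ + 1, 0 => 1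
  | m + 1, n + 1 => ∑ k ∈ Finset.Icc 1 (n + 1), higherBell m k * stirling (n + 1) k

open Polynomial Finset fwdDiff

section NewtonInterpolation

noncomputable def choosePoly (K : Type*) [Field K] (k : ℕ) : K[X] :=
  C (k.factorial : K)⁻¹ * descPochhammer K k

variable {K : Type*} [Field K]

lemma natDegree_choosePoly_le (k : ℕ) : (choosePoly K k).natDegree ≤ k :=
  natDegree_C_mul_le _ _ |>.trans (descPochhammer_natDegree K k).le

lemma eval_choosePoly_natCast [CharZero K] (k n : ℕ) :
    (choosePoly K k).eval (n : K) = n.choose k := by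
  have hk : (k.factorial : K) ≠ 0 := Nat.cast_ne_zero.mpr k.factorial_ne_zero
  rw [choosePoly, eval_mul, eval_C, descPochhammer_eval_eq_descFactorial,
    Nat.descFactorial_eq_factorial_mul_choose, Nat.cast_mul, inv_mul_cancel_left₀ hk]

lemma fwdDiff_iter_eq_zero_of_le {M G : Type*} [AddCommMonoid M] [AddCommGroup G] {h : M}
    {f : M → G} {d k : ℕ} (hf : (Δ_[h])^[d] f = 0) (hdk : d ≤ k) : (Δ_[h])^[k] f = 0 := by
  obtain ⟨j, rfl⟩ := Nat.exists_eq_add_of_le' hdk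
  rw [Function.iterate_add_apply, hf]
  exact Function.iterate_fixed (fwdDiff_const h 0) j

theorem exists_polynomial_of_fwdDiff_iter_eq_zero [CharZero K] {f : ℕ → K} {d : ℕ}
    (hf : (Δ_[1])^[d + 1] f = 0) :
    ∃ P : K[X], P.natDegree ≤ d ∧ ∀ n : ℕ, f n = P.eval (n : K) := by
  refine ⟨∑ k ∈ range (d + 1), choosePoly K k * C ((Δ_[1])^[k] f 0), ?_, fun n => ?_⟩
  · refine natDegree_sum_le_of_forall_le _ _ fun k hk => ?_
    exact natDegree_mul_C_le _ _ |>.trans <| (natDegree_choosePoly_le k).trans <|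
      mem_range_succ_iff.mp hk
  · have newton := shift_eq_sum_fwdDiff_iter 1 f n 0
    simp only [zero_add, smul_eq_mul, mul_one, nsmul_eq_mul] at newton
    rw [newton]
    simp only [eval_finsetSum, eval_mul, eval_C, eval_choosePoly_natCast]
    calc ∑ k ∈ range (n + 1), (n.choose k : K) * (Δ_[1])^[k] f 0
        = ∑ k ∈ range (n + d + 1), (n.choose k : K) * (Δ_[1])^[k] f 0 :=
          sum_subset (range_subset_range.mpr (by omega)) fun k _ hk => by
            rw [Nat.choose_eq_zero_of_lt (by simpa using hk), Nat.cast_zero, zero_mul]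
      _ = ∑ k ∈ range (d + 1), (n.choose k : K) * (Δ_[1])^[k] f 0 := by
          refine (sum_subset (range_subset_range.mpr (by omega)) fun k _ hk => ?_).symm
          rw [fwdDiff_iter_eq_zero_of_le hf (by simpa using hk), Pi.zero_apply, mul_zero]

end NewtonInterpolation

lemma stirling_eq_stirlingSecond (n k : ℕ) : stirling n k = Nat.stirlingSecond n k := by
  induction n generalizing k with
  | zero => cases k <;> rfl
  | succ n ih => cases k <;> simp [stirling, Nat.stirlingSecond_succ_succ, ih]

lemma stirling_self (n : ℕ) : stirling n n = 1 := by
  rw [stirling_eq_stirlingSecond, Nat.stirlingSecond_self]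

lemma higherBell_zero_right (m : ℕ) : higherBell m 0 = 1 := by
  cases m <;> rfl

lemma fwdDiff_higherBell (n : ℕ) :
    Δ_[1] (fun m => (higherBell m (n + 1) : ℚ)) =
      ∑ k ∈ Icc 1 n, (stirling (n + 1) k : ℚ) • fun m => (higherBell m k : ℚ) := by
  ext m
  simp only [fwdDiff, higherBell, sum_Icc_succ_top (Nat.le_add_left 1 n),
    stirling_self, Finset.sum_apply, Pi.smul_apply, smul_eq_mul, Nat.cast_add, Nat.cast_sum,
    Nat.cast_mul, mul_one, add_sub_cancel_right]
  exact sum_congr rfl fun k _ => mul_comm _ _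

theorem fwdDiff_iter_higherBell_eq_zero (n : ℕ) (hn : n ≠ 0) :
    (Δ_[1])^[n] (fun m => (higherBell m n : ℚ)) = 0 := by
  induction n using Nat.strong_induction_on with
  | _ n ih =>
  obtain ⟨n, rfl⟩ := Nat.exists_eq_succ_of_ne_zero hn
  rw [Function.iterate_succ_apply, fwdDiff_higherBell, fwdDiff_iter_finsetSum]
  refine sum_eq_zero fun k hk => ?_
  obtain ⟨hk1, hkn⟩ := mem_Icc.mp hk
  rw [fwdDiff_iter_const_smul, fwdDiff_iter_eq_zero_of_le (ih k (by omega) (by omega)) hkn,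
    smul_zero]

theorem stmt5_general (n : ℕ) :
    ∃ P : Polynomial ℚ, P.natDegree ≤ n - 1 ∧
      ∀ m : ℕ, (higherBell m n : ℚ) = P.eval (m : ℚ) := by
  rcases n with _ | n
  · exact ⟨1, natDegree_one.le, fun m => by simp [higherBell_zero_right]⟩
  · exact exists_polynomial_of_fwdDiff_iter_eq_zero
      (fwdDiff_iter_higherBell_eq_zero (n + 1) n.succ_ne_zero)

theorem stmt5 (n : ℕ) (hn : 1 ≤ n) :
    ∃ P : Polynomial ℚ, P.natDegree ≤ n - 1 ∧
      ∀ m : ℕ, (higherBell m n : ℚ) = P.eval (m : ℚ) :=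
  stmt5_general n
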